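/- For any graph G and any vertex v, adim(G) ≤ adim(G−v) + 1, where G−v denotes the graph obtained by deleting v; moreover the bound is attained by complete graphs K_n for n ≥ 3. -/

import Mathlib

/-!
Adding the deleted vertex `v` to an adjacency resolving set of `G - v` gives one of `G`: `v`
separates itself from every other vertex, and two vertices other than `v` are separated by the
old set because distances truncated at `2` only depend on equality and adjacency, which `G - v`
inherits from `G`. In `K_n` two vertices outside a resolving set see every vertex of it at
distance `1`, so `adim K_n = n - 1`, and deleting a vertex turns `K_n` into `K_{n-1}`.
-/

open SimpleGraph Finset

variable {V : Type*}

/-- truncated distance `d_k(x,y) = min(d(x,y), k+1)` with `d = ∞` across components. -/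
noncomputable def truncDist (G : SimpleGraph V) (k : ℕ) (x y : V) : ℕ∞ :=
  min (G.edist x y) (k + 1)

/-- `f` is a resolving broadcast of `G`. -/
def IsResolvingBroadcast (G : SimpleGraph V) (f : V → ℕ) : Prop :=
  ∀ x y : V, x ≠ y → ∃ z : V, 0 < f z ∧ truncDist G (f z) x z ≠ truncDist G (f z) y z

/-- broadcast dimension -/
noncomputable def bdim (G : SimpleGraph V) [Fintype V] : ℕ :=
  sInf {c : ℕ | ∃ f : V → ℕ, IsResolvingBroadcast G f ∧ ∑ v, f v = c}

/-- adjacency resolving set -/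
def IsAdjResolvingSet (G : SimpleGraph V) (S : Set V) : Prop :=
  ∀ x y : V, x ≠ y → ∃ z ∈ S, truncDist G 1 x z ≠ truncDist G 1 y z

/-- adjacency dimension -/
noncomputable def adim (G : SimpleGraph V) [Fintype V] : ℕ :=
  sInf {n : ℕ | ∃ S : Finset V, IsAdjResolvingSet G ↑S ∧ S.card = n}

/-- resolving set (metric dimension) -/
def IsResolvingSet (G : SimpleGraph V) (S : Set V) : Prop :=
  ∀ x y : V, x ≠ y → ∃ z ∈ S, G.edist x z ≠ G.edist y z

/-- metric dimension -/
noncomputable def mdim (G : SimpleGraph V) [Fintype V] : ℕ :=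
  sInf {n : ℕ | ∃ S : Finset V, IsResolvingSet G ↑S ∧ S.card = n}

open scoped Classical in
lemma truncDist_one_eq (G : SimpleGraph V) (x z : V) :
    truncDist G 1 x z = if x = z then 0 else if G.Adj x z then 1 else 2 := by
  unfold truncDist
  rw [show ((1 : ℕ) : ℕ∞) + 1 = 2 by norm_num]
  split_ifs with hxz hadj
  · simp [hxz]
  · simp [edist_eq_one_iff_adj.mpr hadj]
  · have hne0 : G.edist x z ≠ 0 := fun h => hxz (edist_eq_zero_iff.mp h)
    have hne1 : G.edist x z ≠ 1 := fun h => hadj (edist_eq_one_iff_adj.mp h)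
    have hlt : 1 < G.edist x z :=
      lt_of_le_of_ne (Order.one_le_iff_ne_zero.mpr hne0) (Ne.symm hne1)
    exact min_eq_right (by simpa [one_add_one_eq_two] using Order.add_one_le_of_lt hlt)

lemma truncDist_one_eq_zero_iff {G : SimpleGraph V} {x z : V} :
    truncDist G 1 x z = 0 ↔ x = z := by
  rw [truncDist_one_eq]
  split_ifs <;> simp_all

lemma truncDist_one_induce (G : SimpleGraph V) (s : Set V) (x z : s) :
    truncDist (G.induce s) 1 x z = truncDist G 1 x z := by
  rw [truncDist_one_eq, truncDist_one_eq]
  split_ifs <;> simp_all [Subtype.ext_iff]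

lemma truncDist_one_top_of_ne {x z : V} (h : x ≠ z) : truncDist (⊤ : SimpleGraph V) 1 x z = 1 := by
  simp [truncDist_one_eq, h]

lemma truncDist_one_self_ne {G : SimpleGraph V} {x y : V} (h : x ≠ y) :
    truncDist G 1 x x ≠ truncDist G 1 y x := by
  rw [truncDist_one_eq_zero_iff.mpr rfl, ne_comm, Ne, truncDist_one_eq_zero_iff]
  exact h.symm

lemma isAdjResolvingSet_of_mem_or_mem {G : SimpleGraph V} {S : Set V}
    (hS : ∀ x y, x ≠ y → x ∈ S ∨ y ∈ S) : IsAdjResolvingSet G S := by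
  intro x y hxy
  rcases hS x y hxy with hx | hy
  · exact ⟨x, hx, truncDist_one_self_ne hxy⟩
  · exact ⟨y, hy, (truncDist_one_self_ne hxy.symm).symm⟩

section adim

variable [Fintype V] {G : SimpleGraph V}

lemma adim_le_card {S : Finset V} (hS : IsAdjResolvingSet G S) : adim G ≤ S.card :=
  Nat.sInf_le ⟨S, hS, rfl⟩

lemma exists_isAdjResolvingSet_card_eq_adim (G : SimpleGraph V) :
    ∃ S : Finset V, IsAdjResolvingSet G S ∧ S.card = adim G :=
  Nat.sInf_mem (s := {n | ∃ S : Finset V, IsAdjResolvingSet G S ∧ S.card = n})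
    ⟨_, univ, isAdjResolvingSet_of_mem_or_mem (by simp), rfl⟩

lemma adim_le_adim_induce_add (G : SimpleGraph V) (s : Set V) [Fintype s] (t : Finset V)
    (ht : ∀ x ∉ s, x ∈ t) : adim G ≤ adim (G.induce s) + t.card := by
  classical
  obtain ⟨S, hS, hcard⟩ := exists_isAdjResolvingSet_card_eq_adim (G.induce s)
  have hres : IsAdjResolvingSet G ↑(S.map (Function.Embedding.subtype _) ∪ t) := by
    intro x y hxy
    by_cases hxy_s : x ∈ s ∧ y ∈ s
    · obtain ⟨z, hzS, hz⟩ := hS ⟨x, hxy_s.1⟩ ⟨y, hxy_s.2⟩ (by simpa [Subtype.ext_iff] using hxy)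
      rw [truncDist_one_induce, truncDist_one_induce] at hz
      exact ⟨z, mem_union_left _ (mem_map_of_mem _ hzS), hz⟩
    · rcases not_and_or.mp hxy_s with hx | hy
      · exact ⟨x, by simp [ht x hx], truncDist_one_self_ne hxy⟩
      · exact ⟨y, by simp [ht y hy], (truncDist_one_self_ne hxy.symm).symm⟩
  calc adim G ≤ (S.map (Function.Embedding.subtype _) ∪ t).card := adim_le_card hres
    _ ≤ S.card + t.card := (card_union_le _ _).trans (by rw [card_map])
    _ = adim (G.induce s) + t.card := by rw [hcard]

/-- Two vertices outside a resolving set of `⊤` would be at distance `1` from all of it. -/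
lemma IsAdjResolvingSet.card_sub_one_le_of_top {S : Finset V}
    (hS : IsAdjResolvingSet (⊤ : SimpleGraph V) S) : Fintype.card V - 1 ≤ S.card := by
  classical
  have hcompl : Sᶜ.card ≤ 1 := by
    refine card_le_one.mpr fun a ha b hb => by_contra fun hab => ?_
    obtain ⟨z, hzS, hz⟩ := hS a b hab
    have hza : a ≠ z := fun h => (mem_compl.mp ha) (h ▸ hzS)
    have hzb : b ≠ z := fun h => (mem_compl.mp hb) (h ▸ hzS)
    exact hz (by rw [truncDist_one_top_of_ne hza, truncDist_one_top_of_ne hzb])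
  rw [card_compl] at hcompl
  omega

lemma adim_top : adim (⊤ : SimpleGraph V) = Fintype.card V - 1 := by
  classical
  apply le_antisymm
  · rcases isEmpty_or_nonempty V with _ | ⟨⟨w⟩⟩
    · simpa using adim_le_card (S := ∅) (G := ⊤) (fun x => isEmptyElim x)
    · calc adim ⊤ ≤ (univ.erase w).card :=
            adim_le_card (isAdjResolvingSet_of_mem_or_mem fun x y hxy => by
              by_cases hx : x = w
              · exact Or.inr (by simp [← hx, Ne.symm hxy])
              · exact Or.inl (by simp [hx]))
        _ = Fintype.card V - 1 := by simp
  · obtain ⟨S, hS, hcard⟩ := exists_isAdjResolvingSet_card_eq_adim (⊤ : SimpleGraph V)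
    exact hcard ▸ hS.card_sub_one_le_of_top

end adim

theorem stmt_15 :
    (∀ (V : Type) (_ : Fintype V) (_ : DecidableEq V) (G : SimpleGraph V)
      (v : V), adim G ≤ adim (G.induce ({v}ᶜ : Set V)) + 1) ∧
    ∀ (n : ℕ), 3 ≤ n → ∀ v : Fin n,
      adim (⊤ : SimpleGraph (Fin n)) =
        adim ((⊤ : SimpleGraph (Fin n)).induce ({v}ᶜ : Set (Fin n))) + 1 := by
  refine ⟨fun V _ _ G v => ?_, fun n hn v => ?_⟩
  · simpa using adim_le_adim_induce_add G ({v}ᶜ : Set V) {v} (by simp)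
  · rw [induce_top, adim_top, adim_top, Fintype.card_compl_set]
    simp only [Fintype.card_fin, Set.card_singleton]
    omega
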